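/- If A is symmetric positive definite and u ≠ 0, then minimizing the error Φ(−wᵀu/√(wᵀAw)) over all w with wᵀu > 0 is achieved at w = A⁻¹u, and the minimum value is Φ(−√(uᵀA⁻¹u)). -/

import Mathlib

open MeasureTheory ProbabilityTheory Matrix

/-- The standard normal cumulative distribution function `Φ`. -/
noncomputable def stdGaussianCDF (x : ℝ) : ℝ :=
  (gaussianReal 0 1 (Set.Iic x)).toReal

/-!
Since `Φ` is increasing, it suffices to bound `wᵀu / √(wᵀAw)` from above. Cauchy–Schwarz for
the inner product `⟪x, y⟫ = xᵀAy`, applied to `w` and `A⁻¹u`, gives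
`(wᵀu)² ≤ (wᵀAw)(uᵀA⁻¹u)`, so the ratio is at most `√(uᵀA⁻¹u)`; at `w = A⁻¹u` both
`wᵀu` and `wᵀAw` equal `uᵀA⁻¹u`, and the ratio is exactly `√(uᵀA⁻¹u)`.
-/

lemma stdGaussianCDF_mono : Monotone stdGaussianCDF := fun _ _ h =>
  ENNReal.toReal_mono (measure_ne_top _ _) (measure_mono (Set.Iic_subset_Iic.2 h))

lemma Real.div_sqrt_le_sqrt_of_sq_le_mul {a b c : ℝ} (h : a ^ 2 ≤ b * c) :
    a / √b ≤ √c := by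
  rcases (Real.sqrt_nonneg b).eq_or_lt with hb | hb
  · rw [← hb, div_zero]
    exact Real.sqrt_nonneg c
  rw [div_le_iff₀ hb, mul_comm, ← Real.sqrt_mul (Real.sqrt_pos.1 hb).le]
  exact Real.le_sqrt_of_sq_le h

namespace Matrix

variable {ι : Type*} [Fintype ι] {A : Matrix ι ι ℝ}

lemma IsHermitian.dotProduct_mulVec_comm (hA : A.IsHermitian) (x y : ι → ℝ) :
    x ⬝ᵥ A *ᵥ y = y ⬝ᵥ A *ᵥ x := by
  rw [dotProduct_mulVec, ← mulVec_transpose, dotProduct_comm,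
    ← conjTranspose_eq_transpose_of_trivial, hA.eq]

lemma PosSemidef.sq_dotProduct_mulVec_le (hA : A.PosSemidef) (x y : ι → ℝ) :
    (x ⬝ᵥ A *ᵥ y) ^ 2 ≤ (x ⬝ᵥ A *ᵥ x) * (y ⬝ᵥ A *ᵥ y) := by
  have hsymm : y ⬝ᵥ A *ᵥ x = x ⬝ᵥ A *ᵥ y := hA.isHermitian.dotProduct_mulVec_comm y x
  -- The quadratic `t ↦ (t x + y)ᵀ A (t x + y)` is nonnegative, so its discriminant is not positive.
  have hquad : ∀ t : ℝ,
      0 ≤ (x ⬝ᵥ A *ᵥ x) * (t * t) + 2 * (x ⬝ᵥ A *ᵥ y) * t + y ⬝ᵥ A *ᵥ y := by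
    intro t
    have h := hA.dotProduct_mulVec_nonneg (t • x + y)
    simp only [star_trivial, mulVec_add, mulVec_smul, add_dotProduct, dotProduct_add,
      smul_dotProduct, dotProduct_smul, smul_eq_mul, hsymm] at h
    linarith
  have := discrim_le_zero hquad
  rw [discrim] at this
  linarith

variable [DecidableEq ι]

lemma PosDef.mulVec_inv_mulVec (hA : A.PosDef) (u : ι → ℝ) : A *ᵥ (A⁻¹ *ᵥ u) = u := by
  rw [mulVec_mulVec, mul_nonsing_inv A (A.isUnit_iff_isUnit_det.mp hA.isUnit), one_mulVec]

lemma PosDef.inv_mulVec_dotProduct_mulVec_inv_mulVec (hA : A.PosDef) (u : ι → ℝ) :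
    (A⁻¹ *ᵥ u) ⬝ᵥ A *ᵥ (A⁻¹ *ᵥ u) = u ⬝ᵥ A⁻¹ *ᵥ u := by
  rw [hA.mulVec_inv_mulVec, dotProduct_comm]

lemma PosDef.sq_dotProduct_le_mul_inv (hA : A.PosDef) (w u : ι → ℝ) :
    (w ⬝ᵥ u) ^ 2 ≤ (w ⬝ᵥ A *ᵥ w) * (u ⬝ᵥ A⁻¹ *ᵥ u) := by
  have h := hA.posSemidef.sq_dotProduct_mulVec_le w (A⁻¹ *ᵥ u)
  rwa [hA.inv_mulVec_dotProduct_mulVec_inv_mulVec, hA.mulVec_inv_mulVec] at h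

end Matrix

theorem error_min_at_Ainv_u_general
    {K : ℕ} (A : Matrix (Fin K) (Fin K) ℝ) (hA : A.PosDef)
    (u : Fin K → ℝ) :
    (∀ w : Fin K → ℝ, 0 < w ⬝ᵥ u →
        stdGaussianCDF (-(Real.sqrt (u ⬝ᵥ A⁻¹ *ᵥ u))) ≤
          stdGaussianCDF (-((w ⬝ᵥ u) / Real.sqrt (w ⬝ᵥ A *ᵥ w)))) ∧
      stdGaussianCDF
          (-(((A⁻¹ *ᵥ u) ⬝ᵥ u) / Real.sqrt ((A⁻¹ *ᵥ u) ⬝ᵥ A *ᵥ (A⁻¹ *ᵥ u)))) =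
        stdGaussianCDF (-(Real.sqrt (u ⬝ᵥ A⁻¹ *ᵥ u))) := by
  refine ⟨fun w _ => stdGaussianCDF_mono (neg_le_neg ?_), ?_⟩
  · exact Real.div_sqrt_le_sqrt_of_sq_le_mul (hA.sq_dotProduct_le_mul_inv w u)
  · rw [hA.inv_mulVec_dotProduct_mulVec_inv_mulVec, dotProduct_comm,
      hA.inv.isHermitian.dotProduct_mulVec_comm, Real.div_sqrt]

/-- **Minimization of the Gaussian error criterion.** If `A` is symmetric positive
definite and `u ≠ 0`, then over all `w` with `wᵀu > 0`, the error
`Φ(−wᵀu/√(wᵀAw))` is minimized at `w = A⁻¹u`, with minimum value `Φ(−√(uᵀA⁻¹u))`. -/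
theorem error_min_at_Ainv_u
    {K : ℕ} (A : Matrix (Fin K) (Fin K) ℝ) (hA : A.PosDef)
    (u : Fin K → ℝ) (hu : u ≠ 0) :
    (∀ w : Fin K → ℝ, 0 < w ⬝ᵥ u →
        stdGaussianCDF (-(Real.sqrt (u ⬝ᵥ A⁻¹ *ᵥ u))) ≤
          stdGaussianCDF (-((w ⬝ᵥ u) / Real.sqrt (w ⬝ᵥ A *ᵥ w)))) ∧
      stdGaussianCDF
          (-(((A⁻¹ *ᵥ u) ⬝ᵥ u) / Real.sqrt ((A⁻¹ *ᵥ u) ⬝ᵥ A *ᵥ (A⁻¹ *ᵥ u)))) =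
        stdGaussianCDF (-(Real.sqrt (u ⬝ᵥ A⁻¹ *ᵥ u))) :=
  error_min_at_Ainv_u_general A hA u
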